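/- Let a > 0 be a real constant and p ≥ 0 an integer. The set of real polynomials v in four variables (t, x, y, z) of total degree at most p that satisfy the formal polynomial identity ∂²v/∂t² − a·(∂²v/∂x² + ∂²v/∂y² + ∂²v/∂z²) = 0 is an ℝ-linear subspace of the polynomial ring, and its dimension equals (1/6)·(p + 1)(p + 2)(2p + 3). -/

import Mathlib

open MvPolynomial

section Aux

noncomputable def trefftzE2 (p : ℕ) :
    {f : Fin 4 → ℕ // ∑ i, f i ≤ p} ≃ {g : Fin 5 → ℕ // ∑ i, g i = p} where
  toFun f := ⟨Fin.cons (p - ∑ i, f.1 i) f.1, by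
    rw [Fin.sum_cons]; exact Nat.sub_add_cancel f.2⟩
  invFun g := ⟨Fin.tail g.1, by
    have := g.2; rw [Fin.sum_univ_succ] at this
    simp only [Fin.tail]; omega⟩
  left_inv f := by ext i; simp [Fin.tail]
  right_inv g := by
    ext i
    refine Fin.cases ?_ (fun j => ?_) i
    · have := g.2; rw [Fin.sum_univ_succ] at this
      simp only [Fin.cons_zero, Fin.tail]
      omega
    · simp [Fin.tail]

noncomputable def trefftzE3 (p : ℕ) :
    {g : Fin 5 →₀ ℕ // (g.sum fun _ e => e) = p} ≃ Sym (Fin 5) p where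
  toFun g := ⟨g.1.toMultiset, by
    rw [Finsupp.card_toMultiset]; exact g.2⟩
  invFun m := ⟨Multiset.toFinsupp m.1, by
    show ((Multiset.toFinsupp m.1).sum fun _ => id) = p
    rw [← Finsupp.card_toMultiset, Multiset.toFinsupp_toMultiset]; exact m.2⟩
  left_inv g := by ext : 1; exact Finsupp.toMultiset_toFinsupp _
  right_inv m := by ext : 1; exact Multiset.toFinsupp_toMultiset _

noncomputable def trefftzEAll (p : ℕ) :
    {n : Fin 4 →₀ ℕ // (n.sum fun _ e => e) ≤ p} ≃ Sym (Fin 5) p :=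
  ((Finsupp.equivFunOnFinite.subtypeEquiv (fun n => by
      rw [Finsupp.sum_fintype] <;> simp [Finsupp.equivFunOnFinite])).trans
    ((trefftzE2 p).trans ((Finsupp.equivFunOnFinite.symm.subtypeEquiv (fun g => by
      rw [Finsupp.sum_fintype] <;> simp [Finsupp.equivFunOnFinite] <;> exact Iff.rfl)).trans (trefftzE3 p))))

lemma trefftz_finrank_rtd (p : ℕ) :
    Module.finrank ℝ (restrictTotalDegree (Fin 4) ℝ p) = (p + 4).choose 4 := by
  classical
  have b := basisRestrictSupport ℝ { n : Fin 4 →₀ ℕ | (n.sum fun _ e => e) ≤ p }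
  haveI : Fintype {n : Fin 4 →₀ ℕ // (n.sum fun _ e => e) ≤ p} :=
    Fintype.ofEquiv _ (trefftzEAll p).symm
  haveI : Fintype ({ n : Fin 4 →₀ ℕ | (n.sum fun _ e => e) ≤ p} : Set _) := by
    assumption
  rw [restrictTotalDegree, Module.finrank_eq_card_basis b]
  have : Fintype.card ({ n : Fin 4 →₀ ℕ | (n.sum fun _ e => e) ≤ p} : Set _)
      = Fintype.card (Sym (Fin 5) p) := Fintype.card_congr (trefftzEAll p)
  rw [this, Sym.card_sym_eq_choose]
  simp only [Fintype.card_fin]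
  rw [show 5 + p - 1 = p + 4 by omega]
  have h := Nat.choose_symm (show 4 ≤ p + 4 by omega)
  rw [Nat.add_sub_cancel] at h
  rw [h]

lemma trefftz_totalDegree_pderiv_le {n : ℕ} (i : Fin 4) (f : MvPolynomial (Fin 4) ℝ)
    (h : f.totalDegree ≤ n + 1) : ((pderiv i) f).totalDegree ≤ n := by
  classical
  conv_lhs => rw [f.as_sum, map_sum]
  refine totalDegree_finsetSum_le fun s hs => ?_
  rw [pderiv_monomial]
  rcases Nat.eq_zero_or_pos (s i) with h0 | h1
  · rw [h0]; simp
  · refine (totalDegree_monomial_le _ _).trans ?_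
    have hle : Finsupp.single i 1 ≤ s := by
      rw [Finsupp.single_le_iff]; exact h1
    have hs2 : ((s - Finsupp.single i 1).sum fun _ => id) + 1 = s.sum fun _ e => e := by
      conv_rhs => rw [← tsub_add_cancel_of_le hle]
      rw [Finsupp.sum_add_index' (fun _ => rfl) (fun _ _ _ => rfl),
        Finsupp.sum_single_index rfl]
      rfl
    have := le_totalDegree hs
    omega

noncomputable def waveOp (a : ℝ) : MvPolynomial (Fin 4) ℝ →ₗ[ℝ] MvPolynomial (Fin 4) ℝ :=
  ((pderiv (R := ℝ) (σ := Fin 4) 0).toLinearMap ∘ₗ (pderiv 0).toLinearMap)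
    - a • (((pderiv (R := ℝ) (σ := Fin 4) 1).toLinearMap ∘ₗ (pderiv 1).toLinearMap)
        + ((pderiv (R := ℝ) (σ := Fin 4) 2).toLinearMap ∘ₗ (pderiv 2).toLinearMap)
        + ((pderiv (R := ℝ) (σ := Fin 4) 3).toLinearMap ∘ₗ (pderiv 3).toLinearMap))

lemma waveOp_apply (a : ℝ) (v : MvPolynomial (Fin 4) ℝ) :
    waveOp a v = pderiv 0 (pderiv 0 v)
      - C a * (pderiv 1 (pderiv 1 v) + pderiv 2 (pderiv 2 v) + pderiv 3 (pderiv 3 v)) := by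
  simp only [waveOp, LinearMap.sub_apply, LinearMap.smul_apply, LinearMap.add_apply,
    LinearMap.comp_apply, smul_eq_C_mul]
  rfl

lemma trefftz_pd2_monomial (i : Fin 4) (s : Fin 4 →₀ ℕ) (c : ℝ) :
    pderiv i (pderiv i (monomial s c))
      = monomial (s - Finsupp.single i 2) (c * (s i) * ((s i - 1 : ℕ) : ℝ)) := by
  rw [pderiv_monomial, pderiv_monomial]
  congr 1
  · rw [tsub_tsub, ← Finsupp.single_add]
  · rw [Finsupp.tsub_apply, Finsupp.single_eq_same]

lemma trefftz_sum_add_single0 (s : Fin 4 →₀ ℕ) :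
    ((s + Finsupp.single 0 2).sum fun _ e => e) = (s.sum fun _ e => e) + 2 := by
  rw [Finsupp.sum_add_index' (fun _ => rfl) (fun _ _ _ => rfl),
    Finsupp.sum_single_index rfl]

lemma trefftz_step_mem (a : ℝ) (p n : ℕ)
    (ih : ∀ m, m < n → ∀ s : Fin 4 →₀ ℕ, (s.sum fun _ e => e) + 2 ≤ p →
      s 1 + s 2 + s 3 ≤ m →
      monomial s (1 : ℝ) ∈ Submodule.map (waveOp a) (restrictTotalDegree (Fin 4) ℝ p))
    (s : Fin 4 →₀ ℕ) (hdeg : (s.sum fun _ e => e) + 2 ≤ p) (hn : s 1 + s 2 + s 3 ≤ n)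
    (i : Fin 4) (hi : i ≠ 0) (c : ℝ) :
    pderiv i (pderiv i (monomial (s + Finsupp.single 0 2) c))
      ∈ Submodule.map (waveOp a) (restrictTotalDegree (Fin 4) ℝ p) := by
  classical
  rw [trefftz_pd2_monomial]
  have hs'i : ((s + Finsupp.single 0 2) : Fin 4 →₀ ℕ) i = s i := by
    rw [Finsupp.add_apply, Finsupp.single_apply, if_neg (fun h => hi h.symm), add_zero]
  rw [hs'i]
  rcases lt_or_ge (s i) 2 with h2 | h2
  · interval_cases h : (s i)
    · simp
    · simp
  · set e : Fin 4 →₀ ℕ := s + Finsupp.single 0 2 - Finsupp.single i 2 with he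
    have hle : Finsupp.single i 2 ≤ s + Finsupp.single 0 2 := by
      rw [Finsupp.single_le_iff, hs'i]; exact h2
    have hesum : (e.sum fun _ e => e) = s.sum fun _ e => e := by
      have : ((e + Finsupp.single i 2).sum fun _ e => e)
          = (e.sum fun _ e => e) + 2 := by
        rw [Finsupp.sum_add_index' (fun _ => rfl) (fun _ _ _ => rfl),
          Finsupp.sum_single_index rfl]
      rw [show e + Finsupp.single i 2 = s + Finsupp.single 0 2 from
        tsub_add_cancel_of_le hle, trefftz_sum_add_single0] at this
      omega
    have hej : ∀ j : Fin 4, j ≠ 0 → e j = s j - Finsupp.single i 2 j := by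
      intro j hj
      rw [he, Finsupp.tsub_apply, Finsupp.add_apply, Finsupp.single_apply,
        if_neg (fun h => hj h.symm), add_zero]
    have hi1 : i = 1 ∨ i = 2 ∨ i = 3 := by omega
    have hsp2 : 2 ≤ s 1 + s 2 + s 3 := by
      rcases hi1 with h | h | h <;> subst h <;> omega
    have hesp : e 1 + e 2 + e 3 = s 1 + s 2 + s 3 - 2 := by
      rw [hej 1 (by decide), hej 2 (by decide), hej 3 (by decide)]
      rcases hi1 with h | h | h <;> subst h <;>
        rw [Finsupp.single_eq_same, Finsupp.single_eq_of_ne (by decide),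
          Finsupp.single_eq_of_ne (by decide)] <;> omega
    have hmem := ih (s 1 + s 2 + s 3 - 2) (by omega) e (by omega) (by omega)
    have := Submodule.smul_mem _ (c * (s i) * ((s i - 1 : ℕ) : ℝ)) hmem
    rw [smul_monomial] at this
    rwa [smul_eq_mul, mul_one] at this

lemma trefftz_monomial_mem (a : ℝ) (p : ℕ) :
    ∀ n : ℕ, ∀ s : Fin 4 →₀ ℕ, (s.sum fun _ e => e) + 2 ≤ p → s 1 + s 2 + s 3 ≤ n →
    monomial s (1 : ℝ) ∈ Submodule.map (waveOp a) (restrictTotalDegree (Fin 4) ℝ p) := by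
  intro n
  induction n using Nat.strong_induction_on with
  | _ n ih =>
  intro s hdeg hn
  set c : ℝ := 1 / (((s 0 : ℝ) + 1) * ((s 0 : ℝ) + 2)) with hc
  set u : MvPolynomial (Fin 4) ℝ := monomial (s + Finsupp.single 0 2) c with hu
  have hu_mem : u ∈ restrictTotalDegree (Fin 4) ℝ p := by
    rw [mem_restrictTotalDegree]
    refine (totalDegree_monomial_le _ _).trans ?_
    show ((s + Finsupp.single 0 2).sum fun _ e => e) ≤ p
    rw [trefftz_sum_add_single0]; omega
  have h00 : pderiv 0 (pderiv 0 u) = monomial s 1 := by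
    rw [hu, trefftz_pd2_monomial]
    have h0 : ((s + Finsupp.single 0 2) : Fin 4 →₀ ℕ) 0 = s 0 + 2 := by
      rw [Finsupp.add_apply, Finsupp.single_eq_same]
    rw [show ((s + Finsupp.single 0 2) : Fin 4 →₀ ℕ) - Finsupp.single 0 2 = s by simp]
    rw [h0, show s 0 + 2 - 1 = s 0 + 1 from rfl, hc]
    congr 1
    have h1 : ((s 0 : ℝ) + 1) ≠ 0 := by positivity
    have h2 : ((s 0 : ℝ) + 2) ≠ 0 := by positivity
    push_cast
    field_simp
  have key : monomial s (1 : ℝ) = waveOp a u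
      + a • (pderiv 1 (pderiv 1 u) + pderiv 2 (pderiv 2 u) + pderiv 3 (pderiv 3 u)) := by
    rw [waveOp_apply, h00, smul_eq_C_mul]
    ring
  rw [key]
  refine Submodule.add_mem _ (Submodule.mem_map_of_mem hu_mem) ?_
  refine Submodule.smul_mem _ _
    (Submodule.add_mem _ (Submodule.add_mem _ ?_ ?_) ?_) <;>
    exact trefftz_step_mem a p n ih s hdeg hn _ (by decide) c

lemma trefftz_rtd_le_map (a : ℝ) (p : ℕ) (hp : 2 ≤ p) :
    restrictTotalDegree (Fin 4) ℝ (p - 2)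
      ≤ Submodule.map (waveOp a) (restrictTotalDegree (Fin 4) ℝ p) := by
  intro f hf
  rw [mem_restrictTotalDegree] at hf
  rw [f.as_sum]
  refine Submodule.sum_mem _ fun s hs => ?_
  have hds : (s.sum fun _ e => e) + 2 ≤ p := by
    have := (le_totalDegree hs).trans hf
    omega
  have := Submodule.smul_mem _ (coeff s f)
    (trefftz_monomial_mem a p (s 1 + s 2 + s 3) s hds le_rfl)
  rwa [smul_monomial, smul_eq_mul, mul_one] at this

lemma trefftz_waveOp_deg (a : ℝ) {p : ℕ} (hp : 2 ≤ p) {v : MvPolynomial (Fin 4) ℝ}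
    (hv : v.totalDegree ≤ p) : (waveOp a v).totalDegree ≤ p - 2 := by
  rw [waveOp_apply]
  have hd : ∀ i : Fin 4, (pderiv i (pderiv i v)).totalDegree ≤ p - 2 := fun i =>
    trefftz_totalDegree_pderiv_le i _ (trefftz_totalDegree_pderiv_le i v (by omega))
  have hsum : (pderiv 1 (pderiv 1 v) + pderiv 2 (pderiv 2 v)
      + pderiv 3 (pderiv 3 v)).totalDegree ≤ p - 2 :=
    (totalDegree_add _ _).trans (max_le ((totalDegree_add _ _).trans
      (max_le (hd 1) (hd 2))) (hd 3))
  have hCa : (C a * (pderiv 1 (pderiv 1 v) + pderiv 2 (pderiv 2 v)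
      + pderiv 3 (pderiv 3 v))).totalDegree ≤ p - 2 :=
    (totalDegree_mul _ _).trans (by simpa [totalDegree_C] using hsum)
  rw [sub_eq_add_neg]
  refine (totalDegree_add _ _).trans (max_le (hd 0) ?_)
  rw [← neg_one_smul ℝ]
  exact (totalDegree_smul_le _ _).trans hCa

lemma trefftz_ch2 (n : ℕ) : 2 * (n + 2).choose 2 = (n + 1) * (n + 2) := by
  induction n with
  | zero => rfl
  | succ n ih =>
    rw [show n + 1 + 2 = (n + 2) + 1 by omega, Nat.choose_succ_succ (n + 2) 1,
      Nat.choose_one_right, mul_add, ih]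
    ring

lemma trefftz_ch3 (n : ℕ) : 6 * (n + 3).choose 3 = (n + 1) * (n + 2) * (n + 3) := by
  induction n with
  | zero => rfl
  | succ n ih =>
    rw [show n + 1 + 3 = (n + 3) + 1 by omega, Nat.choose_succ_succ (n + 3) 2]
    have h2 := trefftz_ch2 (n + 1)
    rw [show n + 1 + 2 = n + 3 by omega] at h2
    have hr : 3 * ((n + 2) * (n + 3)) + (n + 1) * (n + 2) * (n + 3)
        = (n + 1 + 1) * (n + 1 + 2) * (n + 1 + 3) := by ring
    linarith

lemma trefftz_ch4 (n : ℕ) : 24 * (n + 4).choose 4 = (n + 1) * (n + 2) * (n + 3) * (n + 4) := by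
  induction n with
  | zero => rfl
  | succ n ih =>
    rw [show n + 1 + 4 = (n + 4) + 1 by omega, Nat.choose_succ_succ (n + 4) 3]
    have h3 := trefftz_ch3 (n + 1)
    rw [show n + 1 + 3 = n + 4 by omega] at h3
    have hr : 4 * ((n + 2) * (n + 3) * (n + 4)) + (n + 1) * (n + 2) * (n + 3) * (n + 4)
        = (n + 1 + 1) * (n + 1 + 2) * (n + 1 + 3) * (n + 1 + 4) := by ring
    linarith

end Aux

set_option synthInstance.maxHeartbeats 1000000 in
/-- **Dimension of the polynomial Trefftz space, case d = 3.**
The set of real polynomials `v` in four variables `t = X 0`, `x = X 1`,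
`y = X 2`, `z = X 3` of total degree at most `p` satisfying the formal wave
equation `∂²v/∂t² - a·(∂²v/∂x² + ∂²v/∂y² + ∂²v/∂z²) = 0` is an ℝ-linear
subspace of dimension `(1/6)·(p+1)(p+2)(2p+3)` (stated multiplied by 6 to stay
in ℕ). -/
theorem trefftz_dim_d3 (a : ℝ) (ha : 0 < a) (p : ℕ) :
    ∃ S : Submodule ℝ (MvPolynomial (Fin 4) ℝ),
      (S : Set (MvPolynomial (Fin 4) ℝ)) =
        {v : MvPolynomial (Fin 4) ℝ | v.totalDegree ≤ p ∧
          pderiv 0 (pderiv 0 v)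
            - C a * (pderiv 1 (pderiv 1 v) + pderiv 2 (pderiv 2 v)
                + pderiv 3 (pderiv 3 v)) = 0} ∧
      6 * Module.finrank ℝ S = (p + 1) * (p + 2) * (2 * p + 3) := by
  classical
  set V := restrictTotalDegree (Fin 4) ℝ p with hV
  refine ⟨V ⊓ LinearMap.ker (waveOp a), ?_, ?_⟩
  · ext v
    simp only [SetLike.mem_coe, Submodule.mem_inf, LinearMap.mem_ker, waveOp_apply,
      Set.mem_setOf_eq, hV, mem_restrictTotalDegree]
  · rcases lt_or_ge p 2 with hp | hp
    · have hker : V ≤ LinearMap.ker (waveOp a) := by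
        intro v hv
        rw [LinearMap.mem_ker, waveOp_apply]
        have hdeg : v.totalDegree ≤ 1 :=
          le_trans ((mem_restrictTotalDegree _ _ _).mp hv) (by omega)
        have hz : ∀ i : Fin 4, pderiv i (pderiv i v) = 0 := by
          intro i
          have h1 : (pderiv i v).totalDegree ≤ 0 :=
            trefftz_totalDegree_pderiv_le i v (by omega)
          have hall := (totalDegree_eq_zero_iff _ _).mp (Nat.le_zero.mp h1)
          conv_lhs => rw [(pderiv i v).as_sum, map_sum]
          refine Finset.sum_eq_zero fun m hm => ?_
          rw [pderiv_monomial, hall m hm i, Nat.cast_zero, mul_zero, monomial_zero]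
        rw [hz 0, hz 1, hz 2, hz 3]
        ring
      rw [inf_eq_left.mpr hker, hV, trefftz_finrank_rtd]
      interval_cases p <;> simp [Nat.choose]
    · set W := restrictTotalDegree (Fin 4) ℝ (p - 2) with hW
      have hmaps : ∀ v : V, waveOp a v.1 ∈ W := fun v => by
        rw [hW, mem_restrictTotalDegree]
        exact trefftz_waveOp_deg a hp ((mem_restrictTotalDegree _ _ _).mp v.2)
      set F : V →ₗ[ℝ] W := LinearMap.codRestrict W ((waveOp a).comp V.subtype) hmaps with hF
      have hsurj : Function.Surjective F := by
        rintro ⟨w, hw⟩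
        obtain ⟨v, hv, hvw⟩ := trefftz_rtd_le_map a p hp hw
        exact ⟨⟨v, hv⟩, Subtype.ext hvw⟩
      have hrn := LinearMap.finrank_range_add_finrank_ker F
      have hrange : Module.finrank ℝ (LinearMap.range F) = Module.finrank ℝ W := by
        rw [LinearMap.range_eq_top.mpr hsurj]
        exact finrank_top ℝ W
      have hkereq : LinearMap.ker F
          = Submodule.comap V.subtype (V ⊓ LinearMap.ker (waveOp a)) := by
        have hkc := LinearMap.ker_codRestrict W ((waveOp a).comp V.subtype) hmaps
        rw [hF, hkc, LinearMap.ker_comp]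
        ext x
        simp only [Submodule.mem_comap, Submodule.mem_inf]
        exact ⟨fun h => ⟨x.2, h⟩, fun h => h.2⟩
      have hkdim : Module.finrank ℝ (V ⊓ LinearMap.ker (waveOp a) : Submodule ℝ _)
          = Module.finrank ℝ (LinearMap.ker F) := by
        rw [hkereq]
        exact (LinearEquiv.finrank_eq
          (Submodule.comapSubtypeEquivOfLe
            (inf_le_left : V ⊓ LinearMap.ker (waveOp a) ≤ V))).symm
      obtain ⟨q, rfl⟩ : ∃ q, p = q + 2 := ⟨p - 2, by omega⟩
      have hV' : Module.finrank ℝ V = (q + 6).choose 4 := by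
        have := trefftz_finrank_rtd (q + 2)
        rw [show q + 2 + 4 = q + 6 by omega] at this
        exact this
      have hW' : Module.finrank ℝ W = (q + 4).choose 4 := by
        have := trefftz_finrank_rtd (q + 2 - 2)
        rw [show q + 2 - 2 + 4 = q + 4 by omega] at this
        exact this
      have e1 := trefftz_ch4 q
      have e2 := trefftz_ch4 (q + 2)
      rw [show q + 2 + 4 = q + 6 by omega] at e2
      rw [show q + 2 + 1 = q + 3 by omega, show q + 2 + 2 = q + 4 by omega,
        show 2 * (q + 2) + 3 = 2 * q + 7 by omega]
      rw [hrange, hV', hW', ← hkdim] at hrn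
      set K := Module.finrank ℝ (V ⊓ LinearMap.ker (waveOp a) : Submodule ℝ _) with hK
      have hr : 4 * ((q + 3) * (q + 4) * (2 * q + 7)) + (q + 1) * (q + 2) * (q + 3) * (q + 4)
          = (q + 2 + 1) * (q + 2 + 2) * (q + 2 + 3) * (q + 2 + 4) := by ring
      have h24 : 24 * K = 4 * ((q + 3) * (q + 4) * (2 * q + 7)) := by linarith
      linarith
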